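/- Abstract attack-freeness from AGS (three players, TTP-inviolability case): Let φ_O, φ_R, φ_T ⊆ S be specifications and let, for each coalition Y ⊆ {O, R, T}, Tr(Y) ⊆ S denote the traces when players in Y play their most general behavior and the others follow the refinement. Assume (A1) Tr(∅) ⊆ φ_O ∩ φ_R ∩ φ_T (weak co-synthesis); (A2) Tr({R,T}) ⊆ (φ_R ∩ φ_T → φ_O), Tr({O,T}) ⊆ (φ_O ∩ φ_T → φ_R), Tr({O,R}) ⊆ (φ_O ∩ φ_R → φ_T); (A3) TTP-inviolability: Tr({O,R}) ⊆ φ_T and Tr({O}) ⊆ φ_T and Tr({R}) ⊆ φ_T; (A4) monotonicity of trace sets: Y ⊆ Y' implies Tr(Y) ⊆ Tr(Y'). Then for every Y ⊆ {O,R}, there is no Y-attack, i.e., no trace in Tr(Y) that lies in φ_i for all i ∈ Y but outside φ_j for some j ∉ Y. -/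
import Mathlib


/-- The three participants of a fair non-repudiation protocol. -/
inductive Player where
  | O : Player
  | R : Player
  | T : Player
deriving DecidableEq

/-- Implication of trace sets: `A → B` is `Aᶜ ∪ B`. -/
def impSet {S : Type*} (A B : Set S) : Set S := Aᶜ ∪ B

/-- Abstract attack-freeness from AGS (TTP-inviolability case): under weak
co-synthesis, the AGS implication conditions, TTP inviolability, and
monotonicity of trace sets in the coalition, no coalition `Y ⊆ {O, R}` has a
`Y`-attack. -/
theorem ags_attack_free {S : Type*}
    (φ : Player → Set S) (Tr : Set Player → Set S)
    (A1 : Tr ∅ ⊆ φ Player.O ∩ φ Player.R ∩ φ Player.T)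
    (A2O : Tr {Player.R, Player.T} ⊆
      impSet (φ Player.R ∩ φ Player.T) (φ Player.O))
    (A2R : Tr {Player.O, Player.T} ⊆
      impSet (φ Player.O ∩ φ Player.T) (φ Player.R))
    (A2T : Tr {Player.O, Player.R} ⊆
      impSet (φ Player.O ∩ φ Player.R) (φ Player.T))
    (A3a : Tr {Player.O, Player.R} ⊆ φ Player.T)
    (A3b : Tr {Player.O} ⊆ φ Player.T)
    (A3c : Tr {Player.R} ⊆ φ Player.T)
    (A4 : ∀ Y Y' : Set Player, Y ⊆ Y' → Tr Y ⊆ Tr Y') :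
    ∀ Y : Set Player, Y ⊆ {Player.O, Player.R} →
      ¬ ∃ t ∈ Tr Y, (∀ i ∈ Y, t ∈ φ i) ∧ ∃ j ∉ Y, t ∉ φ j := by
  intro Y hY ⟨t, htTr, hin, j, hjY, hjφ⟩
  have hT : Player.T ∉ Y := fun h => by cases hY h <;> simp_all
  by_cases hO : Player.O ∈ Y <;> by_cases hR : Player.R ∈ Y
  · -- Y = {O,R} up to subset; t ∈ Tr {O,R}
    have ht2 : t ∈ Tr {Player.O, Player.R} := A4 Y _ hY htTr
    have htT := A3a ht2
    cases j with
    | O => exact hjY hO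
    | R => exact hjY hR
    | T => exact hjφ htT
  · have hsub : Y ⊆ {Player.O} := by
      intro x hx; cases hY hx with
      | inl h => exact h
      | inr h => exact absurd (h ▸ hx) hR
    have ht1 : t ∈ Tr {Player.O} := A4 Y _ hsub htTr
    have htT : t ∈ φ Player.T := A3b ht1
    have htO : t ∈ φ Player.O := hin _ hO
    have ht2 : t ∈ Tr {Player.O, Player.T} := by
      refine A4 _ _ ?_ ht1; intro x hx; exact Or.inl hx
    have htR : t ∈ φ Player.R := by
      rcases A2R ht2 with h | h
      · exact absurd ⟨htO, htT⟩ h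
      · exact h
    cases j <;> [exact hjY hO; exact hjφ htR; exact hjφ htT]
  · have hsub : Y ⊆ {Player.R} := by
      intro x hx; cases hY hx with
      | inl h => exact absurd (h ▸ hx) hO
      | inr h => exact h
    have ht1 : t ∈ Tr {Player.R} := A4 Y _ hsub htTr
    have htT : t ∈ φ Player.T := A3c ht1
    have htR : t ∈ φ Player.R := hin _ hR
    have ht2 : t ∈ Tr {Player.R, Player.T} := by
      refine A4 _ _ ?_ ht1; intro x hx; exact Or.inl hx
    have htO : t ∈ φ Player.O := by
      rcases A2O ht2 with h | h
      · exact absurd ⟨htR, htT⟩ h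
      · exact h
    cases j <;> [exact hjφ htO; exact hjY hR; exact hjφ htT]
  · have hsub : Y ⊆ (∅ : Set Player) := by
      intro x hx; cases hY hx with
      | inl h => exact absurd (h ▸ hx) hO
      | inr h => exact absurd (h ▸ hx) hR
    have ht0 := A1 (A4 Y _ hsub htTr)
    cases j <;> [exact hjφ ht0.1.1; exact hjφ ht0.1.2; exact hjφ ht0.2]
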